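/- arXiv:1604.00526 — 2 statements merged into one kernel-verified Lean document; each statement's English description precedes it below -/
import Mathlib

section
/- The squared increments are summable, Σ_{k=0}^∞ ‖x^{k+1} − x^k‖² < ∞ (so in particular ‖x^{k+1} − x^k‖ → 0), the Lyapunov values Φ_k converge to a finite limit, and the objective values Ψ(x^k) converge to the same limit. -/
/-!
`Φ_k = Ψ(x^k) + κ_k` drops by at least `C ‖x^{k+1} - x^k‖²` at every step. This combines the
block descent lemma for `f`, the comparison of the prox step with staying put, and Young's
inequality for the delayed-gradient error `M ‖x^k - x^{k-d_k}‖`: since each block moves at most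
`ρ_τ` times in `τ` steps, `‖x^k - x^{k-d_k}‖²` is at most `ρ_τ` times the sum of the last `τ`
squared increments, and that sum is what the drop from `κ_k` to `κ_{k+1}` pays for. As `Φ` is
bounded below, the increments are square-summable and `Φ_k` converges; `κ_k`, a weighted sum of
the last `τ` squared increments, then tends to `0`, so `Ψ(x^k)` has the same limit.
-/

open Finset Filter RealInnerProductSpace

/-- squared ℓ²-norm on the product `H = H₁ × ⋯ × H_m`: `‖x‖² = Σ_j ‖x_j‖²`. -/
noncomputable def sqNorm {m : ℕ} {H : Fin m → Type*} [∀ j, NormedAddCommGroup (H j)]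
    (x : ∀ j, H j) : ℝ := ∑ j, ‖x j‖ ^ 2

/-- the partial gradient map: `y ↦ ∇_j f(x_1, …, x_{j-1}, y, x_{j+1}, …, x_m)`. -/
noncomputable def pgrad {m : ℕ} {H : Fin m → Type*} [∀ j, NormedAddCommGroup (H j)]
    [∀ j, InnerProductSpace ℝ (H j)] [∀ j, FiniteDimensional ℝ (H j)]
    (f : (∀ j, H j) → ℝ) (x : ∀ j, H j) (j : Fin m) (y : H j) : H j :=
  gradient (fun z => f (Function.update x j z)) y

namespace EReal

lemma coe_finset_sum {ι : Type*} (s : Finset ι) (g : ι → ℝ) :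
    ((∑ i ∈ s, g i : ℝ) : EReal) = ∑ i ∈ s, (g i : EReal) :=
  map_sum (⟨⟨Real.toEReal, coe_zero⟩, coe_add⟩ : ℝ →+ EReal) g s

lemma finset_sum_ne_bot {ι : Type*} {s : Finset ι} {g : ι → EReal} (h : ∀ i ∈ s, g i ≠ ⊥) :
    ∑ i ∈ s, g i ≠ ⊥ :=
  Finset.sum_induction g (· ≠ ⊥) (fun _ _ ha hb => add_ne_bot_iff.2 ⟨ha, hb⟩) zero_ne_bot h

lemma ne_top_of_finset_sum_ne_top {ι : Type*} {s : Finset ι} {g : ι → EReal}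
    (hbot : ∀ i ∈ s, g i ≠ ⊥) (htop : ∑ i ∈ s, g i ≠ ⊤) {i : ι} (hi : i ∈ s) : g i ≠ ⊤ := by
  classical
  intro h
  rw [← Finset.add_sum_erase s g hi, h] at htop
  exact htop (top_add_of_ne_bot (finset_sum_ne_bot fun j hj => hbot j (mem_of_mem_erase hj)))

lemma ne_top_of_add_coe_le {a b : EReal} {s : ℝ} (h : a + s ≤ b) (hb : b ≠ ⊤) : a ≠ ⊤ := by
  rintro rfl
  rw [top_add_coe, top_le_iff] at h
  exact hb h

lemma toReal_add_le_of_add_coe_le {a b : EReal} {s : ℝ} (h : a + s ≤ b) (ha : a ≠ ⊥)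
    (hb : b ≠ ⊤) (hb' : b ≠ ⊥) : a.toReal + s ≤ b.toReal := by
  lift a to ℝ using ⟨ne_top_of_add_coe_le h hb, ha⟩
  lift b to ℝ using ⟨hb, hb'⟩
  exact_mod_cast h

end EReal

theorem image_add_le_add_inner_gradient_add_sq {E : Type*} [NormedAddCommGroup E]
    [InnerProductSpace ℝ E] [CompleteSpace E] {g : E → ℝ} (hg : Differentiable ℝ g) {K : ℝ}
    (hK : ∀ z z', ‖gradient g z - gradient g z'‖ ≤ K * ‖z - z'‖) (y v : E) :
    g (y + v) ≤ g y + ⟪gradient g y, v⟫ + K / 2 * ‖v‖ ^ 2 := by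
  set φ : ℝ → ℝ := fun t => g (y + t • v) - t * ⟪gradient g y, v⟫ - t ^ 2 * (K / 2 * ‖v‖ ^ 2)
  have hφ : ∀ t, HasDerivAt φ
      (⟪gradient g (y + t • v), v⟫ - ⟪gradient g y, v⟫ - 2 * t * (K / 2 * ‖v‖ ^ 2)) t := by
    intro t
    have hline : HasDerivAt (fun s : ℝ => y + s • v) v t := by
      simpa using ((hasDerivAt_id t).smul_const v).const_add y
    have hgline := (hg (y + t • v)).hasGradientAt.hasFDerivAt.comp_hasDerivAt t hline
    simp only [InnerProductSpace.toDual_apply_apply] at hgline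
    refine ((hgline.sub ((hasDerivAt_id t).mul_const ⟪gradient g y, v⟫)).sub
      ((hasDerivAt_pow 2 t).mul_const (K / 2 * ‖v‖ ^ 2))).congr_deriv ?_
    simp only [one_mul, Nat.cast_ofNat, pow_one, Nat.add_one_sub_one]
  have hφ'_nonpos : ∀ t ∈ interior (Set.Ici (0 : ℝ)),
      ⟪gradient g (y + t • v), v⟫ - ⟪gradient g y, v⟫ - 2 * t * (K / 2 * ‖v‖ ^ 2) ≤ 0 := by
    intro t ht
    rw [interior_Ici, Set.mem_Ioi] at ht
    have hlip : ‖gradient g (y + t • v) - gradient g y‖ ≤ K * (t * ‖v‖) := by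
      simpa [norm_smul, abs_of_pos ht] using hK (y + t • v) y
    have hcs := real_inner_le_norm (gradient g (y + t • v) - gradient g y) v
    rw [inner_sub_left] at hcs
    nlinarith [mul_le_mul_of_nonneg_right hlip (norm_nonneg v)]
  have hanti : AntitoneOn φ (Set.Ici 0) :=
    antitoneOn_of_hasDerivWithinAt_nonpos (convex_Ici 0)
      (fun t _ => (hφ t).continuousAt.continuousWithinAt)
      (fun t _ => (hφ t).hasDerivWithinAt) hφ'_nonpos
  have h10 : φ 1 ≤ φ 0 := hanti (by simp) (by simp) zero_le_one
  simp only [φ, one_smul, zero_smul, add_zero] at h10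
  linarith

lemma le_add_inner_pgrad_add_sq {m : ℕ} {H : Fin m → Type*} [∀ j, NormedAddCommGroup (H j)]
    [∀ j, InnerProductSpace ℝ (H j)] [∀ j, FiniteDimensional ℝ (H j)]
    {f : (∀ j, H j) → ℝ} (hf : Differentiable ℝ f) {x y : ∀ j, H j} {j : Fin m}
    (hxy : ∀ i ≠ j, y i = x i) {K : ℝ}
    (hK : ∀ z z', ‖pgrad f x j z - pgrad f x j z'‖ ≤ K * ‖z - z'‖) :
    f y ≤ f x + ⟪pgrad f x j (x j), y j - x j⟫ + K / 2 * ‖y j - x j‖ ^ 2 := by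
  have hy : Function.update x j (y j) = y := by
    funext i
    rcases eq_or_ne i j with rfl | hi
    · exact Function.update_self ..
    · rw [Function.update_of_ne hi, hxy i hi]
  have hupd : Differentiable ℝ (Function.update x j) := fun z =>
    (hasFDerivAt_update x z).differentiableAt
  have key := image_add_le_add_inner_gradient_add_sq (hf.comp hupd) hK (x j) (y j - x j)
  simpa only [pgrad, Function.comp_def, add_sub_cancel, hy, Function.update_eq_self] using key

lemma sqNorm_nonneg {m : ℕ} {H : Fin m → Type*} [∀ j, NormedAddCommGroup (H j)]
    (x : ∀ j, H j) : 0 ≤ sqNorm x :=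
  sum_nonneg fun _ _ => sq_nonneg _

lemma sqNorm_sub_eq_of_eq_off {m : ℕ} {H : Fin m → Type*} [∀ j, NormedAddCommGroup (H j)]
    {y z : ∀ j, H j} {j : Fin m} (h : ∀ i ≠ j, y i = z i) :
    sqNorm (y - z) = ‖y j - z j‖ ^ 2 := by
  rw [sqNorm, Fintype.sum_eq_single j fun i hi => by simp [h i hi]]
  rfl

lemma norm_sub_sq_le_card_mul_sum {E : Type*} [NormedAddCommGroup E] [DecidableEq E]
    (G : ℕ → E) {n N : ℕ} (hnN : n ≤ N) :
    ‖G N - G n‖ ^ 2 ≤ #{i ∈ range N | G (i + 1) ≠ G i} * ∑ i ∈ range N, ‖G (i + 1) - G i‖ ^ 2 := by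
  set s := {i ∈ Ico n N | G (i + 1) ≠ G i}
  have hs : G N - G n = ∑ i ∈ s, (G (i + 1) - G i) := by
    rw [← sum_Ico_sub G hnN, sum_filter_of_ne fun i _ h => sub_ne_zero.1 h]
  have hsub : s ⊆ {i ∈ range N | G (i + 1) ≠ G i} :=
    filter_subset_filter _ fun i hi => mem_range.2 (mem_Ico.1 hi).2
  calc ‖G N - G n‖ ^ 2 ≤ (∑ i ∈ s, ‖G (i + 1) - G i‖) ^ 2 := by
        rw [hs]; gcongr; exact norm_sum_le _ _
    _ ≤ #s * ∑ i ∈ s, ‖G (i + 1) - G i‖ ^ 2 := sq_sum_le_card_mul_sum_sq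
    _ ≤ #{i ∈ range N | G (i + 1) ≠ G i} * ∑ i ∈ range N, ‖G (i + 1) - G i‖ ^ 2 := by
        gcongr
        exact hsub.trans (filter_subset _ _)

lemma inner_le_young_of_norm_le {E : Type*} [NormedAddCommGroup E] [InnerProductSpace ℝ E]
    {u v : E} {M ρ W τ : ℝ} (hM : 0 ≤ M) (hρ : 0 ≤ ρ) (hW : 0 ≤ W) (hτ : 0 < τ)
    (hu : ‖u‖ ≤ M * √(ρ * W)) :
    ⟪u, v⟫ ≤ M * √ρ / (2 * √τ) * (W + τ * ‖v‖ ^ 2) := by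
  have hsτ : 0 < √τ := Real.sqrt_pos.2 hτ
  have hamgm : 2 * √τ * (√W * ‖v‖) ≤ W + τ * ‖v‖ ^ 2 := by
    nlinarith [sq_nonneg (√W - √τ * ‖v‖), Real.sq_sqrt hW, Real.sq_sqrt hτ.le]
  calc ⟪u, v⟫ ≤ ‖u‖ * ‖v‖ := real_inner_le_norm u v
    _ ≤ M * √ρ * (√W * ‖v‖) := by
        rw [Real.sqrt_mul hρ] at hu
        nlinarith [mul_le_mul_of_nonneg_right hu (norm_nonneg v)]
    _ = M * √ρ / (2 * √τ) * (2 * √τ * (√W * ‖v‖)) := by field_simp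
    _ ≤ M * √ρ / (2 * √τ) * (W + τ * ‖v‖ ^ 2) := by gcongr

lemma half_mul_inv_sub_one_mul_add_half_le {c D γ : ℝ} (hc : 0 < c) (hD : 0 < D) (hγ : 0 < γ)
    (hγD : γ ≤ c / D) : 1 / 2 * (1 / c - 1) * D + D / 2 ≤ 1 / (2 * γ) := by
  have hγD' : γ * D ≤ c := (le_div_iff₀ hD).1 hγD
  rw [le_div_iff₀ (by positivity)]
  field_simp
  nlinarith

lemma summable_and_tendsto_of_add_mul_le {u a : ℕ → ℝ} {B C : ℝ} (hC : 0 < C)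
    (ha : ∀ k, 0 ≤ a k) (hB : ∀ k, B ≤ u k) (hu : ∀ k, u (k + 1) + C * a k ≤ u k) :
    Summable a ∧ ∃ l, Tendsto u atTop (nhds l) := by
  have hanti : Antitone u :=
    antitone_nat_of_succ_le fun k => by nlinarith [hu k, ha k]
  have hpartial : ∀ n, C * ∑ k ∈ range n, a k ≤ u 0 - u n := by
    intro n
    induction n with
    | zero => simp
    | succ n ih => rw [sum_range_succ, mul_add]; linarith [hu n]
  refine ⟨summable_of_sum_range_le (c := (u 0 - B) / C) ha fun n => ?_,
    _, tendsto_atTop_ciInf hanti ⟨B, Set.forall_mem_range.2 hB⟩⟩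
  rw [le_div_iff₀' hC]
  linarith [hpartial n, hB n]

noncomputable def weightedWindow (b : ℤ → ℝ) (τ : ℕ) (k : ℤ) : ℝ :=
  ∑ i ∈ range τ, ((i : ℝ) + 1) * b (k - τ + i)

lemma weightedWindow_add_one (b : ℤ → ℝ) (τ : ℕ) (k : ℤ) :
    weightedWindow b τ (k + 1) + ∑ i ∈ range τ, b (k - τ + i) =
      weightedWindow b τ k + τ * b k := by
  set G : ℕ → ℝ := fun i => b (k - τ + i)
  have hshift : weightedWindow b τ (k + 1) = ∑ i ∈ range τ, ((i : ℝ) + 1) * G (i + 1) := by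
    refine sum_congr rfl fun i _ => ?_
    simp only [G, Nat.cast_succ]
    ring_nf
  have hsucc := sum_range_succ' (fun i => (i : ℝ) * G i) τ
  rw [sum_range_succ] at hsucc
  have hsplit : weightedWindow b τ k = ∑ i ∈ range τ, (i : ℝ) * G i + ∑ i ∈ range τ, G i := by
    rw [← sum_add_distrib]
    exact sum_congr rfl fun i _ => by ring
  simp only [Nat.cast_succ, Nat.cast_zero, zero_mul, add_zero] at hsucc
  have hGτ : G τ = b k := by simp [G]
  rw [hshift, hsplit, ← hGτ]
  linarith

lemma tendsto_weightedWindow_zero {b : ℤ → ℝ}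
    (hb : Tendsto (fun k : ℕ => b k) atTop (nhds 0)) (τ : ℕ) :
    Tendsto (fun k : ℕ => weightedWindow b τ k) atTop (nhds 0) := by
  replace hb : Tendsto b atTop (nhds 0) := Nat.map_cast_int_atTop ▸ tendsto_map'_iff.2 hb
  have hshift : ∀ i : ℕ, Tendsto (fun k : ℕ => (k : ℤ) - τ + i) atTop atTop := fun i =>
    tendsto_atTop_atTop.2 fun z => ⟨(z + τ).toNat, fun k hk => by omega⟩
  simpa [weightedWindow] using tendsto_finsetSum (range τ) fun i _ =>
    ((hb.comp (hshift i)).const_mul ((i : ℝ) + 1))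

lemma weightedWindow_nonneg {b : ℤ → ℝ} (hb : ∀ h, 0 ≤ b h) (τ : ℕ) (k : ℤ) :
    0 ≤ weightedWindow b τ k :=
  sum_nonneg fun _ _ => mul_nonneg (by positivity) (hb _)

section AsyncPALM

variable {m : ℕ} {H : Fin m → Type*} {x : ℤ → ∀ j, H j} {jj : ℕ → Fin m} {τ ρτ : ℕ}

lemma card_block_moves_le [∀ j, DecidableEq (H j)] (hx0 : ∀ h : ℤ, h ≤ 0 → x h = x 0)
    (hoff : ∀ (k : ℕ) (j : Fin m), j ≠ jj k → x ((k : ℤ) + 1) j = x k j)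
    (hcount : ∀ (k : ℕ) (j : Fin m),
      Set.ncard {h : ℕ | k - τ ≤ h ∧ h ≤ k ∧ jj h = j} ≤ ρτ) (k : ℕ) (j : Fin m) :
    #{i ∈ range τ | x ((k : ℤ) - τ + (i + 1 : ℕ)) j ≠ x ((k : ℤ) - τ + i) j} ≤ ρτ := by
  -- a block can only move at a time `h ≥ 0` at which it is active
  have hmove : ∀ i, x ((k : ℤ) - τ + (i + 1 : ℕ)) j ≠ x ((k : ℤ) - τ + i) j →
      τ ≤ k + i ∧ jj (k + i - τ) = j := by
    intro i hne
    have hτ : τ ≤ k + i := by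
      by_contra hlt
      rw [hx0 ((k : ℤ) - τ + (i + 1 : ℕ)) (by omega), hx0 ((k : ℤ) - τ + i) (by omega)] at hne
      exact hne rfl
    refine ⟨hτ, by_contra fun hj => hne ?_⟩
    have hcast : ((k + i - τ : ℕ) : ℤ) = k - τ + i := by omega
    simpa [hcast, add_assoc] using hoff (k + i - τ) j (Ne.symm hj)
  rw [← Set.ncard_coe_finset]
  refine (Set.ncard_le_ncard_of_injOn (fun i => k + i - τ) ?_ ?_
    (Set.finite_Icc (k - τ) k |>.subset fun h hh => ⟨hh.1, hh.2.1⟩)).trans (hcount k j)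
  · intro i hi
    simp only [coe_filter, mem_range, Set.mem_ofPred_eq] at hi
    have := hmove i hi.2
    exact ⟨by omega, by omega, this.2⟩
  · intro i₁ hi₁ i₂ hi₂ h
    simp only [coe_filter, mem_range, Set.mem_ofPred_eq] at hi₁ hi₂
    have := (hmove i₁ hi₁.2).1
    have := (hmove i₂ hi₂.2).1
    simp only at h
    omega

lemma iterate_r_ne_top {r : ∀ j, H j → EReal} {f : (∀ j, H j) → ℝ}
    (hfin0 : (f (x 0) : EReal) + ∑ j, r j (x 0 j) < ⊤) (hr_ne_bot : ∀ j y, r j y ≠ ⊥)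
    (hoff : ∀ (k : ℕ) (j : Fin m), j ≠ jj k → x ((k : ℤ) + 1) j = x k j) {q : ℕ → ℝ}
    (hq : ∀ k : ℕ, r (jj k) (x ((k : ℤ) + 1) (jj k)) + (q k : EReal) ≤ r (jj k) (x k (jj k)))
    (k : ℕ) (j : Fin m) : r j (x k j) ≠ ⊤ := by
  induction k generalizing j with
  | zero =>
    have hsum : ∑ j, r j (x 0 j) ≠ ⊤ := fun h => by
      rw [h, EReal.add_top_of_ne_bot (EReal.coe_ne_bot _)] at hfin0
      exact lt_irrefl _ hfin0
    exact EReal.ne_top_of_finset_sum_ne_top (fun i _ => hr_ne_bot i _) hsum (mem_univ j)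
  | succ k ih =>
    push_cast
    rcases eq_or_ne j (jj k) with rfl | hj
    · exact EReal.ne_top_of_add_coe_le (hq k) (ih _)
    · rw [hoff k j hj]
      exact ih j

variable [∀ j, NormedAddCommGroup (H j)]

noncomputable def incrSq (x : ℤ → ∀ j, H j) (h : ℤ) : ℝ := sqNorm (x (h + 1) - x h)

lemma sqNorm_sub_delayed_le (hx0 : ∀ h : ℤ, h ≤ 0 → x h = x 0)
    (hoff : ∀ (k : ℕ) (j : Fin m), j ≠ jj k → x ((k : ℤ) + 1) j = x k j)
    (hcount : ∀ (k : ℕ) (j : Fin m),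
      Set.ncard {h : ℕ | k - τ ≤ h ∧ h ≤ k ∧ jj h = j} ≤ ρτ)
    {d : ℕ → Fin m → ℕ} (hd : ∀ k j, d k j ≤ τ) {xd : ℕ → ∀ j, H j}
    (hxd : ∀ (k : ℕ) (j : Fin m), xd k j = x ((k : ℤ) - d k j) j) (k : ℕ) :
    sqNorm (x k - xd k) ≤ ρτ * ∑ i ∈ range τ, incrSq x (k - τ + i) := by
  classical
  have hblock : ∀ j, ‖x k j - xd k j‖ ^ 2 ≤
      ρτ * ∑ i ∈ range τ, ‖x ((k : ℤ) - τ + (i + 1 : ℕ)) j - x ((k : ℤ) - τ + i) j‖ ^ 2 := by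
    intro j
    have hG := norm_sub_sq_le_card_mul_sum (fun i : ℕ => x ((k : ℤ) - τ + i) j)
      (Nat.sub_le τ (d k j))
    rw [hxd, show (k : ℤ) - d k j = k - τ + (τ - d k j : ℕ) by push_cast [hd k j]; ring]
    refine (le_of_eq_of_le (by simp) hG).trans (mul_le_mul_of_nonneg_right ?_ ?_)
    · exact_mod_cast card_block_moves_le hx0 hoff hcount k j
    · exact sum_nonneg fun _ _ => sq_nonneg _
  calc sqNorm (x k - xd k) = ∑ j, ‖x k j - xd k j‖ ^ 2 := rfl
    _ ≤ ∑ j, ρτ * ∑ i ∈ range τ, ‖x ((k : ℤ) - τ + (i + 1 : ℕ)) j - x ((k : ℤ) - τ + i) j‖ ^ 2 :=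
        sum_le_sum fun j _ => hblock j
    _ = ρτ * ∑ i ∈ range τ, incrSq x (k - τ + i) := by
        rw [← mul_sum, sum_comm]
        simp only [incrSq, sqNorm, Nat.cast_succ, add_assoc, Pi.sub_apply]

variable [∀ j, InnerProductSpace ℝ (H j)] [∀ j, FiniteDimensional ℝ (H j)]
  {f : (∀ j, H j) → ℝ} {r : ∀ j, H j → EReal} {xd : ℕ → ∀ j, H j} {γ : ℕ → ℝ}

lemma lyapunov_decrease {κ : ℕ → ℝ} {L M C : ℝ} (hf : Differentiable ℝ f)
    (hoff : ∀ (k : ℕ) (j : Fin m), j ≠ jj k → x ((k : ℤ) + 1) j = x k j)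
    (hprox : ∀ k : ℕ, (r (jj k) (x ((k : ℤ) + 1) (jj k))).toReal +
        (⟪pgrad f (xd k) (jj k) (xd k (jj k)), x ((k : ℤ) + 1) (jj k) - x k (jj k)⟫ +
          1 / (2 * γ k) * ‖x ((k : ℤ) + 1) (jj k) - x k (jj k)‖ ^ 2) ≤
        (r (jj k) (x k (jj k))).toReal)
    (hLip : ∀ (k : ℕ) (y y' : H (jj k)),
      ‖pgrad f (x k) (jj k) y - pgrad f (x k) (jj k) y'‖ ≤ L * ‖y - y'‖)
    (hMd : ∀ k : ℕ,
      ‖pgrad f (x k) (jj k) (x k (jj k)) - pgrad f (xd k) (jj k) (xd k (jj k))‖ ≤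
        M * √(sqNorm (x k - xd k)))
    (hdelay : ∀ k : ℕ, sqNorm (x k - xd k) ≤ ρτ * ∑ i ∈ range τ, incrSq x (k - τ + i))
    (hκ : ∀ k : ℕ, κ k = M * √ρτ / (2 * √τ) * weightedWindow (incrSq x) τ k)
    (hcoef : ∀ k, C + L / 2 + M * √((ρτ : ℝ) * τ) ≤ 1 / (2 * γ k)) (hM : 0 ≤ M) (hτ : 0 < τ)
    (k : ℕ) :
    f (x ((k : ℤ) + 1)) + ∑ j, (r j (x ((k : ℤ) + 1) j)).toReal + κ (k + 1) + C * incrSq x k ≤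
      f (x k) + ∑ j, (r j (x k j)).toReal + κ k := by
  have hproxk := hprox k
  have hdesc := le_add_inner_pgrad_add_sq hf (hoff k) (hLip k)
  set Δ := x ((k : ℤ) + 1) (jj k) - x k (jj k)
  set W := ∑ i ∈ range τ, incrSq x (k - τ + i)
  set α := M * √ρτ / (2 * √τ)
  have hτ' : (0 : ℝ) < τ := Nat.cast_pos.2 hτ
  have hincr : incrSq x k = ‖Δ‖ ^ 2 := sqNorm_sub_eq_of_eq_off (hoff k)
  have hR : ∑ j, (r j (x ((k : ℤ) + 1) j)).toReal - ∑ j, (r j (x k j)).toReal =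
      (r (jj k) (x ((k : ℤ) + 1) (jj k))).toReal - (r (jj k) (x k (jj k))).toReal := by
    rw [← sum_sub_distrib]
    exact Fintype.sum_eq_single _ fun j hj => by rw [hoff k j hj, sub_self]
  have hcross : ⟪pgrad f (x k) (jj k) (x k (jj k)), Δ⟫ - ⟪pgrad f (xd k) (jj k) (xd k (jj k)), Δ⟫ ≤
      α * (W + τ * ‖Δ‖ ^ 2) := by
    rw [← inner_sub_left]
    exact inner_le_young_of_norm_le hM (Nat.cast_nonneg ρτ) (sum_nonneg fun i _ => sqNorm_nonneg _)
      hτ' ((hMd k).trans (by gcongr; exact hdelay k))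
  have hκstep : κ (k + 1) + α * W = κ k + α * τ * ‖Δ‖ ^ 2 := by
    rw [hκ, hκ, ← hincr, Nat.cast_succ]
    linear_combination α * weightedWindow_add_one (incrSq x) τ k
  have h2ατ : 2 * α * τ = M * √((ρτ : ℝ) * τ) := by
    have hsτ := Real.sqrt_pos.2 hτ'
    rw [Real.sqrt_mul (Nat.cast_nonneg _)]
    simp only [α]
    field_simp
    rw [Real.sq_sqrt hτ'.le]
  have hcoefΔ : (C + L / 2 + 2 * α * τ) * ‖Δ‖ ^ 2 ≤ 1 / (2 * γ k) * ‖Δ‖ ^ 2 :=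
    mul_le_mul_of_nonneg_right (h2ατ ▸ hcoef k) (sq_nonneg _)
  rw [hincr]
  linarith

end AsyncPALM

theorem stmt_2_general {m : ℕ}
    (H : Fin m → Type*) [∀ j, NormedAddCommGroup (H j)]
    [∀ j, InnerProductSpace ℝ (H j)] [∀ j, FiniteDimensional ℝ (H j)]
    -- f is C¹
    (f : (∀ j, H j) → ℝ) (hf : ContDiff ℝ 1 f)
    -- each r_j is proper and lower semicontinuous with values in (−∞, +∞]
    (r : ∀ j, H j → EReal)
    (hr_ne_bot : ∀ j y, r j y ≠ ⊥)
    -- Ψ = f + Σ_j r_j, bounded below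
    (Ψ : (∀ j, H j) → EReal) (hΨ : ∀ x, Ψ x = (f x : EReal) + ∑ j, r j (x j))
    (hΨbdd : ∃ B : ℝ, ∀ x, (B : EReal) ≤ Ψ x)
    -- parameters
    (τ ρτ : ℕ) (hτ : 1 ≤ τ)
    (c M L γmin : ℝ) (hc0 : 0 < c) (hc1 : c < 1) (hM : 0 < M) (hL : 0 < L)
    (hγmin : 0 < γmin)
    -- the iterates, extended by x^h = x^0 for h ≤ 0
    (x : ℤ → ∀ j, H j) (hx0 : ∀ h : ℤ, h ≤ 0 → x h = x 0)
    (hΨx0 : Ψ (x 0) < ⊤)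
    -- active blocks and delays
    (jj : ℕ → Fin m) (d : ℕ → Fin m → ℕ) (hd : ∀ k j, d k j ≤ τ)
    (hcount : ∀ (k : ℕ) (j : Fin m),
      Set.ncard {h : ℕ | k - τ ≤ h ∧ h ≤ k ∧ jj h = j} ≤ ρτ)
    -- the delayed iterate x^{k-d_k}
    (xd : ℕ → ∀ j, H j) (hxd : ∀ (k : ℕ) (j : Fin m), xd k j = x ((k : ℤ) - d k j) j)
    -- stepsizes
    (γ : ℕ → ℝ)
    (hγ : ∀ k, γmin ≤ γ k ∧ γ k ≤ c / (L + 2 * M * Real.sqrt ((ρτ : ℝ) * τ)))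
    -- the update: only block j_k moves, and it moves to a minimizer of the prox-subproblem
    (hoff : ∀ (k : ℕ) (j : Fin m), j ≠ jj k → x ((k : ℤ) + 1) j = x k j)
    (hprox : ∀ (k : ℕ) (y : H (jj k)),
      r (jj k) (x ((k : ℤ) + 1) (jj k)) +
        ((⟪pgrad f (xd k) (jj k) (xd k (jj k)), x ((k : ℤ) + 1) (jj k) - x k (jj k)⟫ +
            (1 / (2 * γ k)) * ‖x ((k : ℤ) + 1) (jj k) - x k (jj k)‖ ^ 2 : ℝ) : EReal) ≤
      r (jj k) y +
        ((⟪pgrad f (xd k) (jj k) (xd k (jj k)), y - x k (jj k)⟫ +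
            (1 / (2 * γ k)) * ‖y - x k (jj k)‖ ^ 2 : ℝ) : EReal))
    -- (i) partial-gradient Lipschitz moduli, bounded by L
    (Lip : ℕ → Fin m → ℝ)
    (hLip : ∀ (k : ℕ) (j : Fin m) (y y' : H j),
      ‖pgrad f (x k) j y - pgrad f (x k) j y'‖ ≤ Lip k j * ‖y - y'‖)
    (hLipL : ∀ k j, Lip k j ≤ L)
    -- (ii) delayed-gradient bound
    (hMd : ∀ k : ℕ,
      ‖pgrad f (x k) (jj k) (x k (jj k)) - pgrad f (xd k) (jj k) (xd k (jj k))‖ ≤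
        M * Real.sqrt (sqNorm (x k - xd k)))
    -- κ_k, the Lyapunov value Φ_k, and the constant C
    (κ : ℕ → ℝ)
    (hκ : ∀ k : ℕ, κ k = (M * Real.sqrt ρτ / (2 * Real.sqrt τ)) *
      ∑ i ∈ Finset.range τ,
        ((i : ℝ) + 1) * sqNorm (x ((k : ℤ) - τ + 1 + i) - x ((k : ℤ) - τ + i)))
    (Φ : ℕ → EReal) (hΦ : ∀ k : ℕ, Φ k = Ψ (x k) + (κ k : EReal))
    (C : ℝ) (hC : C = (1 / 2) * (1 / c - 1) * (L + 2 * M * Real.sqrt ((ρτ : ℝ) * τ))) :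
    Summable (fun k : ℕ => sqNorm (x ((k : ℤ) + 1) - x k)) ∧
    Tendsto (fun k : ℕ => Real.sqrt (sqNorm (x ((k : ℤ) + 1) - x k))) atTop (nhds 0) ∧
    ∃ l : ℝ, Tendsto Φ atTop (nhds (l : EReal)) ∧
      Tendsto (fun k : ℕ => Ψ (x k)) atTop (nhds (l : EReal)) := by
  obtain ⟨B, hB⟩ := hΨbdd
  have hD : 0 < L + 2 * M * √((ρτ : ℝ) * τ) := by positivity
  have hC0 : 0 < C := hC ▸ mul_pos (mul_pos one_half_pos (sub_pos.2 (one_lt_one_div hc0 hc1))) hD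
  have hcoef : ∀ k, C + L / 2 + M * √((ρτ : ℝ) * τ) ≤ 1 / (2 * γ k) := fun k => by
    linarith [half_mul_inv_sub_one_mul_add_half_le hc0 hD (hγmin.trans_le (hγ k).1) (hγ k).2]
  have hself := fun k : ℕ => hprox k (x k (jj k))
  simp only [sub_self, inner_zero_right, norm_zero, zero_pow two_ne_zero, mul_zero, add_zero,
    EReal.coe_zero] at hself
  have hfin := iterate_r_ne_top (hΨ (x 0) ▸ hΨx0) hr_ne_bot hoff hself
  have hκ' : ∀ k : ℕ, κ k = M * √ρτ / (2 * √τ) * weightedWindow (incrSq x) τ k := fun k => by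
    simp only [hκ, weightedWindow, incrSq, add_right_comm]
  set u : ℕ → ℝ := fun k => f (x k) + ∑ j, (r j (x k j)).toReal + κ k
  have hΨu : ∀ k : ℕ, Ψ (x k) = ((u k - κ k : ℝ) : EReal) := fun k => by
    simp only [u, add_sub_cancel_right, hΨ, EReal.coe_add, EReal.coe_finset_sum,
      EReal.coe_toReal (hfin k _) (hr_ne_bot _ _)]
  have hub : ∀ k, B ≤ u k := fun k => by
    have hκ0 : 0 ≤ κ k :=
      hκ' k ▸ mul_nonneg (by positivity) (weightedWindow_nonneg (fun _ => sqNorm_nonneg _) _ _)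
    have := hΨu k ▸ hB (x k)
    linarith [EReal.coe_le_coe_iff.1 this]
  have hdecrease := lyapunov_decrease (hf.differentiable one_ne_zero) hoff
    (fun k => EReal.toReal_add_le_of_add_coe_le (hself k) (hr_ne_bot _ _) (hfin k _)
      (hr_ne_bot _ _))
    (fun k y y' => (hLip k (jj k) y y').trans (by gcongr; exact hLipL k (jj k)))
    hMd (sqNorm_sub_delayed_le hx0 hoff hcount hd hxd) hκ' hcoef hM.le hτ
  obtain ⟨hsum, l, hl⟩ :=
    summable_and_tendsto_of_add_mul_le hC0 (fun k => sqNorm_nonneg _) hub hdecrease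
  have hκ0 : Tendsto κ atTop (nhds 0) := by
    simpa only [mul_zero, ← hκ'] using (tendsto_weightedWindow_zero (b := incrSq x)
      hsum.tendsto_atTop_zero τ).const_mul (M * √ρτ / (2 * √τ))
  refine ⟨hsum, (Real.continuous_sqrt.tendsto' 0 0 Real.sqrt_zero).comp hsum.tendsto_atTop_zero,
    l, (EReal.tendsto_coe.2 hl).congr fun k => ?_,
    (EReal.tendsto_coe.2 (by simpa using hl.sub hκ0)).congr fun k => (hΨu k).symm⟩
  rw [hΦ, hΨu, ← EReal.coe_add, sub_add_cancel]

theorem stmt_2 {m : ℕ} (hm : 1 ≤ m)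
    (H : Fin m → Type*) [∀ j, NormedAddCommGroup (H j)]
    [∀ j, InnerProductSpace ℝ (H j)] [∀ j, FiniteDimensional ℝ (H j)]
    -- f is C¹
    (f : (∀ j, H j) → ℝ) (hf : ContDiff ℝ 1 f)
    -- each r_j is proper and lower semicontinuous with values in (−∞, +∞]
    (r : ∀ j, H j → EReal)
    (hr_ne_top : ∀ j, ∃ y, r j y ≠ ⊤) (hr_ne_bot : ∀ j y, r j y ≠ ⊥)
    (hr_lsc : ∀ j, LowerSemicontinuous (r j))
    -- Ψ = f + Σ_j r_j, bounded below
    (Ψ : (∀ j, H j) → EReal) (hΨ : ∀ x, Ψ x = (f x : EReal) + ∑ j, r j (x j))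
    (hΨbdd : ∃ B : ℝ, ∀ x, (B : EReal) ≤ Ψ x)
    -- parameters
    (τ ρτ : ℕ) (hτ : 1 ≤ τ) (hρτ1 : 1 ≤ ρτ) (hρττ : ρτ ≤ τ)
    (c M L γmin : ℝ) (hc0 : 0 < c) (hc1 : c < 1) (hM : 0 < M) (hL : 0 < L)
    (hγmin : 0 < γmin)
    -- the iterates, extended by x^h = x^0 for h ≤ 0
    (x : ℤ → ∀ j, H j) (hx0 : ∀ h : ℤ, h ≤ 0 → x h = x 0)
    (hΨx0 : Ψ (x 0) < ⊤)
    -- active blocks and delays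
    (jj : ℕ → Fin m) (d : ℕ → Fin m → ℕ) (hd : ∀ k j, d k j ≤ τ)
    (hcount : ∀ (k : ℕ) (j : Fin m),
      Set.ncard {h : ℕ | k - τ ≤ h ∧ h ≤ k ∧ jj h = j} ≤ ρτ)
    -- the delayed iterate x^{k-d_k}
    (xd : ℕ → ∀ j, H j) (hxd : ∀ (k : ℕ) (j : Fin m), xd k j = x ((k : ℤ) - d k j) j)
    -- stepsizes
    (γ : ℕ → ℝ)
    (hγ : ∀ k, γmin ≤ γ k ∧ γ k ≤ c / (L + 2 * M * Real.sqrt ((ρτ : ℝ) * τ)))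
    -- the update: only block j_k moves, and it moves to a minimizer of the prox-subproblem
    (hoff : ∀ (k : ℕ) (j : Fin m), j ≠ jj k → x ((k : ℤ) + 1) j = x k j)
    (hprox : ∀ (k : ℕ) (y : H (jj k)),
      r (jj k) (x ((k : ℤ) + 1) (jj k)) +
        ((⟪pgrad f (xd k) (jj k) (xd k (jj k)), x ((k : ℤ) + 1) (jj k) - x k (jj k)⟫ +
            (1 / (2 * γ k)) * ‖x ((k : ℤ) + 1) (jj k) - x k (jj k)‖ ^ 2 : ℝ) : EReal) ≤
      r (jj k) y +
        ((⟪pgrad f (xd k) (jj k) (xd k (jj k)), y - x k (jj k)⟫ +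
            (1 / (2 * γ k)) * ‖y - x k (jj k)‖ ^ 2 : ℝ) : EReal))
    -- (i) partial-gradient Lipschitz moduli, bounded by L
    (Lip : ℕ → Fin m → ℝ)
    (hLip : ∀ (k : ℕ) (j : Fin m) (y y' : H j),
      ‖pgrad f (x k) j y - pgrad f (x k) j y'‖ ≤ Lip k j * ‖y - y'‖)
    (hLipL : ∀ k j, Lip k j ≤ L)
    -- (ii) delayed-gradient bound
    (hMd : ∀ k : ℕ,
      ‖pgrad f (x k) (jj k) (x k (jj k)) - pgrad f (xd k) (jj k) (xd k (jj k))‖ ≤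
        M * Real.sqrt (sqNorm (x k - xd k)))
    -- κ_k, the Lyapunov value Φ_k, and the constant C
    (κ : ℕ → ℝ)
    (hκ : ∀ k : ℕ, κ k = (M * Real.sqrt ρτ / (2 * Real.sqrt τ)) *
      ∑ i ∈ Finset.range τ,
        ((i : ℝ) + 1) * sqNorm (x ((k : ℤ) - τ + 1 + i) - x ((k : ℤ) - τ + i)))
    (Φ : ℕ → EReal) (hΦ : ∀ k : ℕ, Φ k = Ψ (x k) + (κ k : EReal))
    (C : ℝ) (hC : C = (1 / 2) * (1 / c - 1) * (L + 2 * M * Real.sqrt ((ρτ : ℝ) * τ))) :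
    Summable (fun k : ℕ => sqNorm (x ((k : ℤ) + 1) - x k)) ∧
    Tendsto (fun k : ℕ => Real.sqrt (sqNorm (x ((k : ℤ) + 1) - x k))) atTop (nhds 0) ∧
    ∃ l : ℝ, Tendsto Φ atTop (nhds (l : EReal)) ∧
      Tendsto (fun k : ℕ => Ψ (x k)) atTop (nhds (l : EReal)) :=
  stmt_2_general H f hf r hr_ne_bot Ψ hΨ hΨbdd τ ρτ hτ c M L γmin hc0 hc1 hM hL hγmin x hx0 hΨx0 jj
    d hd hcount xd hxd γ hγ hoff hprox Lip hLip hLipL hMd κ hκ Φ hΦ C hC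
end

section
/- If x^{k₀+1} ≠ x^{k₀} for some k₀ ∈ ℕ, then lim_{k→∞} Ψ(x^k) ≤ Ψ(x^0) − C‖x^{k₀+1} − x^{k₀}‖² < Ψ(x^0); that is, the limiting objective value is strictly smaller than the initial objective value whenever some update actually moves an iterate. -/
open Finset Filter RealInnerProductSpace

open Topology

/-!
Along the iterates, `Φ_k = Ψ(x^k) + κ_k` drops by at least `C‖x^{k+1} - x^k‖²` per step. This
combines the descent lemma for `f` along the active block, the prox inequality tested at the
current point, and Young's inequality for the delay error: `‖x^k - x^{k-d_k}‖²` is at most `ρ_τ`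
times the last `τ` squared increments, since at most `ρ_τ` of them move a given block, and the
change `κ_{k+1} - κ_k` pays for exactly that. So `Φ_k` decreases and is bounded below, the squared
increments are summable, `κ_k → 0`, and `Ψ(x^k)` converges to `lim Φ_k ≤ Φ_{k₀+1} ≤
Φ_0 - C‖x^{k₀+1} - x^{k₀}‖²`, where `Φ_0 = Ψ(x^0)` because `x` is constant before time `0`.
-/

theorem le_add_inner_gradient_add_sq {E : Type*} [NormedAddCommGroup E] [InnerProductSpace ℝ E]
    [CompleteSpace E] {g : E → ℝ} (hg : Differentiable ℝ g) {L : ℝ}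
    (hlip : ∀ y y', ‖gradient g y - gradient g y'‖ ≤ L * ‖y - y'‖) (a Δ : E) :
    g (a + Δ) ≤ g a + ⟪gradient g a, Δ⟫ + L / 2 * ‖Δ‖ ^ 2 := by
  set φ : ℝ → ℝ := fun t => g (a + t • Δ) - t * ⟪gradient g a, Δ⟫ - L / 2 * t ^ 2 * ‖Δ‖ ^ 2
  have hφ' : ∀ t, HasDerivAt φ
      (⟪gradient g (a + t • Δ), Δ⟫ - ⟪gradient g a, Δ⟫ - L * t * ‖Δ‖ ^ 2) t := by
    intro t
    have hline : HasDerivAt (fun s : ℝ => a + s • Δ) Δ t := by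
      simpa using ((hasDerivAt_id t).smul_const Δ).const_add a
    have hgt := ((hg _).hasGradientAt.hasFDerivAt).comp_hasDerivAt t hline
    simp only [InnerProductSpace.toDual_apply_apply] at hgt
    refine ((hgt.sub ((hasDerivAt_id t).mul_const ⟪gradient g a, Δ⟫)).sub
      (((hasDerivAt_pow 2 t).const_mul (L / 2)).mul_const (‖Δ‖ ^ 2))).congr_deriv ?_
    simp only [Nat.cast_ofNat, one_mul, Nat.add_one_sub_one, pow_one]
    ring
  have hanti : AntitoneOn φ (Set.Ici 0) := by
    refine antitoneOn_of_hasDerivWithinAt_nonpos (convex_Ici 0)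
      (fun t _ => (hφ' t).continuousAt.continuousWithinAt)
      (fun t _ => (hφ' t).hasDerivWithinAt) fun t ht => ?_
    rw [interior_Ici] at ht
    have hgrad : ‖gradient g (a + t • Δ) - gradient g a‖ ≤ L * (t * ‖Δ‖) := by
      simpa [norm_smul, abs_of_pos (Set.mem_Ioi.1 ht)] using hlip (a + t • Δ) a
    have hcs := real_inner_le_norm (gradient g (a + t • Δ) - gradient g a) Δ
    rw [inner_sub_left] at hcs
    linarith [mul_le_mul_of_nonneg_right hgrad (norm_nonneg Δ)]
  have h10 : φ 1 ≤ φ 0 := hanti (Set.mem_Ici.2 le_rfl) (Set.mem_Ici.2 zero_le_one) zero_le_one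
  simp only [φ, zero_smul, one_smul, add_zero, zero_mul, one_mul, sub_zero, one_pow, mul_one,
    ne_eq, OfNat.ofNat_ne_zero, not_false_eq_true, zero_pow, mul_zero] at h10
  linarith

theorem norm_sum_sq_le_card_filter_mul {ι E : Type*} [NormedAddCommGroup E] [DecidableEq E]
    (s : Finset ι) (v : ι → E) :
    ‖∑ i ∈ s, v i‖ ^ 2 ≤ #{i ∈ s | v i ≠ 0} * ∑ i ∈ s, ‖v i‖ ^ 2 := by
  rw [← sum_filter_ne_zero]
  calc ‖∑ i ∈ s with v i ≠ 0, v i‖ ^ 2 ≤ (∑ i ∈ s with v i ≠ 0, ‖v i‖) ^ 2 := by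
        gcongr; exact norm_sum_le _ _
    _ ≤ #{i ∈ s | v i ≠ 0} * ∑ i ∈ s with v i ≠ 0, ‖v i‖ ^ 2 := sq_sum_le_card_mul_sum_sq
    _ ≤ #{i ∈ s | v i ≠ 0} * ∑ i ∈ s, ‖v i‖ ^ 2 := by
        gcongr
        exact filter_subset _ _

theorem norm_sub_delayed_sq_le {E : Type*} [NormedAddCommGroup E] {y : ℤ → E} {P : ℕ → Prop}
    (hy : ∀ h : ℤ, y (h + 1) ≠ y h → ∃ n : ℕ, h = n ∧ P n) {k τ ρ : ℕ}
    (hcount : Set.ncard {n : ℕ | k - τ ≤ n ∧ n ≤ k ∧ P n} ≤ ρ) {dd : ℕ} (hdd : dd ≤ τ) :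
    ‖y k - y (k - dd)‖ ^ 2 ≤
      ρ * ∑ i ∈ range τ, ‖y ((k : ℤ) - τ + i + 1) - y ((k : ℤ) - τ + i)‖ ^ 2 := by
  classical
  set F : ℕ → E := fun i => y ((k : ℤ) - τ + i)
  have hF : ∀ i : ℕ, F (i + 1) - F i = y ((k : ℤ) - τ + i + 1) - y ((k : ℤ) - τ + i) := by
    intro i; simp only [F]; push_cast; ring_nf
  have htel : y k - y (k - dd) = ∑ i ∈ Ico (τ - dd) τ, (F (i + 1) - F i) := by
    rw [sum_Ico_eq_sub _ (Nat.sub_le τ dd), sum_range_sub, sum_range_sub]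
    simp only [F, Nat.cast_sub hdd]
    ring_nf
    abel
  -- the nonzero increments happen at distinct active times in the window `[k - τ, k]`
  set T := {i ∈ Ico (τ - dd) τ | F (i + 1) - F i ≠ 0}
  have hactive : ∀ i ∈ T, ∃ n : ℕ, (k : ℤ) - τ + i = n ∧ P n := fun i hi =>
    hy _ (by rw [← sub_ne_zero, ← hF]; exact (mem_filter.1 hi).2)
  have hcard : #T ≤ ρ := by
    set g : ℕ → ℕ := fun i => ((k : ℤ) - τ + i).toNat
    have hinj : Set.InjOn g T := fun a ha b hb hab => by
      obtain ⟨na, hna, -⟩ := hactive a ha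
      obtain ⟨nb, hnb, -⟩ := hactive b hb
      simp only [g] at hab
      omega
    have hsub : (T.image g : Set ℕ) ⊆ {n | k - τ ≤ n ∧ n ≤ k ∧ P n} := by
      intro _ hm
      obtain ⟨i, hi, rfl⟩ := mem_image.1 hm
      obtain ⟨n, hn, hPn⟩ := hactive i hi
      have hiτ := (mem_Ico.1 (mem_filter.1 hi).1).2
      simp only [g, hn, Int.toNat_natCast]
      exact ⟨by omega, by omega, hPn⟩
    calc #T = #(T.image g) := (card_image_of_injOn hinj).symm
      _ = Set.ncard (T.image g : Set ℕ) := (Set.ncard_coe_finset _).symm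
      _ ≤ _ := Set.ncard_le_ncard hsub ((Set.finite_Iic k).subset fun n hn => hn.2.1)
      _ ≤ ρ := hcount
  calc ‖y k - y (k - dd)‖ ^ 2 ≤ #T * ∑ i ∈ Ico (τ - dd) τ, ‖F (i + 1) - F i‖ ^ 2 := by
        rw [htel]; exact norm_sum_sq_le_card_filter_mul _ _
    _ ≤ ρ * ∑ i ∈ range τ, ‖F (i + 1) - F i‖ ^ 2 := by
        gcongr
        exact fun i hi => mem_range.2 (mem_Ico.1 hi).2
    _ = _ := by simp only [hF]

noncomputable def windowSum (τ : ℕ) (D : ℤ → ℝ) (k : ℤ) : ℝ := ∑ i ∈ range τ, D (k - τ + i)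

noncomputable def weightedWindowSum (τ : ℕ) (D : ℤ → ℝ) (k : ℤ) : ℝ :=
  ∑ i ∈ range τ, ((i : ℝ) + 1) * D (k - τ + i)

theorem weightedWindowSum_succ (τ : ℕ) (D : ℤ → ℝ) (k : ℤ) :
    weightedWindowSum τ D (k + 1) = weightedWindowSum τ D k + τ * D k - windowSum τ D k := by
  have hshift := (sum_range_succ' (fun i : ℕ => (i : ℝ) * D (k - τ + i)) τ).symm.trans
    (sum_range_succ _ τ)
  simp only [Nat.cast_zero, zero_mul, add_zero, sub_add_cancel] at hshift
  have hsplit :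
      weightedWindowSum τ D k = ∑ i ∈ range τ, (i : ℝ) * D (k - τ + i) + windowSum τ D k := by
    rw [weightedWindowSum, windowSum, ← sum_add_distrib]
    exact sum_congr rfl fun i _ => by ring
  have hsucc : weightedWindowSum τ D (k + 1) =
      ∑ i ∈ range τ, ((i + 1 : ℕ) : ℝ) * D (k - τ + (i + 1 : ℕ)) :=
    sum_congr rfl fun i _ => by push_cast; ring_nf
  linarith

theorem weightedWindowSum_nonneg (τ : ℕ) {D : ℤ → ℝ} (hD : ∀ h, 0 ≤ D h) (k : ℤ) :
    0 ≤ weightedWindowSum τ D k :=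
  sum_nonneg fun _ _ => mul_nonneg (by positivity) (hD _)

theorem weightedWindowSum_eq_zero (τ : ℕ) {D : ℤ → ℝ} {k : ℤ} (hD : ∀ h < k, D h = 0) :
    weightedWindowSum τ D k = 0 :=
  sum_eq_zero fun i hi => by rw [hD _ (by have := mem_range.1 hi; omega), mul_zero]

theorem tendsto_weightedWindowSum_zero (τ : ℕ) {D : ℤ → ℝ}
    (hD : Tendsto (fun n : ℕ => D n) atTop (𝓝 0)) :
    Tendsto (fun n : ℕ => weightedWindowSum τ D n) atTop (𝓝 0) := by
  have hDℤ : Tendsto D atTop (𝓝 0) := by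
    rwa [← Nat.map_cast_int_atTop, tendsto_map'_iff]
  have hterm : ∀ i : ℕ, Tendsto (fun n : ℕ => ((i : ℝ) + 1) * D ((n : ℤ) - τ + i)) atTop (𝓝 0) := by
    intro i
    have hshift : Tendsto (fun n : ℕ => (n : ℤ) - τ + i) atTop atTop := by
      simpa only [sub_add_eq_add_sub, add_sub_assoc] using
        tendsto_atTop_add_const_right _ ((i : ℤ) - τ) tendsto_natCast_atTop_atTop
    simpa using (hDℤ.comp hshift).const_mul ((i : ℝ) + 1)
  simpa [weightedWindowSum] using tendsto_finsetSum (range τ) fun i _ => hterm i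

section Descent

variable {φ e : ℕ → ℝ} {B : ℝ}

theorem sum_range_le_sub_of_succ_add_le (hstep : ∀ k, φ (k + 1) + e k ≤ φ k) (n : ℕ) :
    ∑ i ∈ range n, e i ≤ φ 0 - φ n := by
  rw [← sum_range_sub']
  exact sum_le_sum fun i _ => by linarith [hstep i]

theorem tendsto_zero_of_succ_add_le (hB : ∀ k, B ≤ φ k) (he : ∀ k, 0 ≤ e k)
    (hstep : ∀ k, φ (k + 1) + e k ≤ φ k) : Tendsto e atTop (𝓝 0) :=
  (summable_of_sum_range_le (c := φ 0 - B) he fun n =>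
    (sum_range_le_sub_of_succ_add_le hstep n).trans (by linarith [hB n])).tendsto_atTop_zero

theorem exists_tendsto_le_sub_of_succ_add_le (hB : ∀ k, B ≤ φ k) (he : ∀ k, 0 ≤ e k)
    (hstep : ∀ k, φ (k + 1) + e k ≤ φ k) (k₀ : ℕ) :
    ∃ l, Tendsto φ atTop (𝓝 l) ∧ l ≤ φ 0 - e k₀ := by
  have hanti : Antitone φ := antitone_nat_of_succ_le fun k => by linarith [hstep k, he k]
  have hbdd : BddBelow (Set.range φ) := ⟨B, Set.forall_mem_range.2 hB⟩
  refine ⟨⨅ k, φ k, tendsto_atTop_ciInf hanti hbdd, ?_⟩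
  linarith [ciInf_le hbdd (k₀ + 1), hstep k₀, hanti (Nat.zero_le k₀)]

end Descent

theorem exists_real_of_succ_add_coe_le {a : ℕ → EReal} {u : ℕ → ℝ} {B : ℝ} (h0 : a 0 ≠ ⊤)
    (hB : ∀ k, (B : EReal) ≤ a k) (hstep : ∀ k, a (k + 1) + u k ≤ a k) :
    ∃ ψ : ℕ → ℝ, (∀ k, a k = ψ k) ∧ ∀ k, ψ (k + 1) + u k ≤ ψ k := by
  have hfin : ∀ k, a k ≠ ⊤ := by
    intro k
    induction k with
    | zero => exact h0
    | succ k ih =>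
      intro htop
      exact ih (top_le_iff.1 (by simpa [htop] using hstep k))
  have hcoe : ∀ k, a k = (a k).toReal := fun k =>
    (EReal.coe_toReal (hfin k) ((EReal.bot_lt_coe B).trans_le (hB k)).ne').symm
  refine ⟨fun k => (a k).toReal, hcoe, fun k => ?_⟩
  have hk := hstep k
  rw [hcoe k, hcoe (k + 1)] at hk
  exact_mod_cast hk

theorem exists_tendsto_le_sub_of_lyapunov {a : ℕ → EReal} {κ e : ℕ → ℝ} {B : ℝ}
    (h0 : a 0 ≠ ⊤) (hB : ∀ k, (B : EReal) ≤ a k) (hκ : ∀ k, 0 ≤ κ k) (hκ0 : κ 0 = 0)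
    (he : ∀ k, 0 ≤ e k) (hstep : ∀ k, a (k + 1) + ((κ (k + 1) + e k - κ k : ℝ) : EReal) ≤ a k)
    (hκ_lim : Tendsto e atTop (𝓝 0) → Tendsto κ atTop (𝓝 0)) (k₀ : ℕ) :
    ∃ l : EReal, Tendsto a atTop (𝓝 l) ∧ l ≤ a 0 - e k₀ := by
  obtain ⟨ψ, hψ, hψstep⟩ := exists_real_of_succ_add_coe_le h0 hB hstep
  have hφstep : ∀ k, ψ (k + 1) + κ (k + 1) + e k ≤ ψ k + κ k := fun k => by
    linarith [hψstep k]
  have hφB : ∀ k, B ≤ ψ k + κ k := fun k => by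
    have hBk := hB k
    rw [hψ k, EReal.coe_le_coe_iff] at hBk
    linarith [hκ k]
  obtain ⟨l, hl, hle⟩ := exists_tendsto_le_sub_of_succ_add_le hφB he hφstep k₀
  have hψ_lim : Tendsto ψ atTop (𝓝 l) := by
    simpa using hl.sub (hκ_lim (tendsto_zero_of_succ_add_le hφB he hφstep))
  refine ⟨l, ?_, ?_⟩
  · rw [funext hψ]
    exact EReal.tendsto_coe.2 hψ_lim
  · rw [hψ 0, ← EReal.coe_sub, EReal.coe_le_coe_iff]
    linarith

theorem EReal.sub_coe_lt_self {a : EReal} (ha_top : a ≠ ⊤) (ha_bot : a ≠ ⊥) {x : ℝ} (hx : 0 < x) :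
    a - x < a := by
  rw [← EReal.coe_toReal ha_top ha_bot, ← EReal.coe_sub, EReal.coe_lt_coe_iff]
  exact sub_lt_self _ hx

theorem coe_add_sum_add_coe_le_of_update {ι : Type*} [Fintype ι] [DecidableEq ι] {H : ι → Type*}
    {f : (∀ j, H j) → ℝ} {r : ∀ j, H j → EReal} {X X' : ∀ j, H j} {j : ι}
    (hoff : ∀ i, i ≠ j → X' i = X i) {q e : ℝ} (hf : f X' + e ≤ f X + q)
    (hr : r j (X' j) + q ≤ r j (X j)) :
    (f X' : EReal) + ∑ i, r i (X' i) + e ≤ f X + ∑ i, r i (X i) := by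
  have hrest : ∑ i ∈ univ.erase j, r i (X' i) = ∑ i ∈ univ.erase j, r i (X i) :=
    sum_congr rfl fun i hi => by rw [hoff i (ne_of_mem_erase hi)]
  rw [← add_sum_erase _ _ (mem_univ j), ← add_sum_erase _ _ (mem_univ j), hrest]
  set R := ∑ i ∈ univ.erase j, r i (X i)
  calc (f X' : EReal) + (r j (X' j) + R) + e = ((f X' + e : ℝ) : EReal) + r j (X' j) + R := by
        rw [EReal.coe_add]; ac_rfl
    _ ≤ ((f X + q : ℝ) : EReal) + r j (X' j) + R := by gcongr
    _ = f X + (r j (X' j) + q) + R := by rw [EReal.coe_add]; ac_rfl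
    _ ≤ f X + (r j (X j) + R) := by rw [add_assoc]; gcongr

theorem exists_eq_natCast_of_ne {ι : Type*} {H : ι → Type*} {x : ℤ → ∀ j, H j}
    (hx0 : ∀ h : ℤ, h ≤ 0 → x h = x 0) {jj : ℕ → ι}
    (hoff : ∀ (k : ℕ) (j : ι), j ≠ jj k → x ((k : ℤ) + 1) j = x k j) {h : ℤ} {j : ι}
    (hne : x (h + 1) j ≠ x h j) : ∃ n : ℕ, h = n ∧ jj n = j := by
  rcases lt_or_ge h 0 with hneg | hnn
  · exact absurd (by rw [hx0 (h + 1) (by omega), hx0 h hneg.le]) hne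
  · lift h to ℕ using hnn
    exact ⟨h, rfl, by_contra fun hj => hne (hoff h j (Ne.symm hj))⟩

section Blocks

variable {m : ℕ} {H : Fin m → Type*} [∀ j, NormedAddCommGroup (H j)]

theorem sqNorm_nonneg_s4 (X : ∀ j, H j) : 0 ≤ sqNorm X :=
  sum_nonneg fun _ _ => by positivity

theorem sqNorm_sub_eq_of_forall_ne {X X' : ∀ j, H j} {j : Fin m} (hoff : ∀ i, i ≠ j → X' i = X i) :
    sqNorm (X' - X) = ‖X' j - X j‖ ^ 2 := by
  rw [sqNorm, sum_eq_single j (fun i _ hi => by simp [hoff i hi]) (by simp)]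
  rfl

theorem sqNorm_pos {X : ∀ j, H j} (hX : X ≠ 0) : 0 < sqNorm X := by
  obtain ⟨j, hj⟩ := Function.ne_iff.1 hX
  exact sum_pos' (fun _ _ => by positivity) ⟨j, mem_univ j, pow_pos (norm_pos_iff.2 hj) 2⟩

noncomputable def sqIncrement (x : ℤ → ∀ j, H j) (h : ℤ) : ℝ := sqNorm (x (h + 1) - x h)

theorem sqIncrement_eq_zero {x : ℤ → ∀ j, H j} (hx0 : ∀ h : ℤ, h ≤ 0 → x h = x 0) {h : ℤ}
    (hh : h < 0) : sqIncrement x h = 0 := by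
  simp [sqIncrement, hx0 (h + 1) (by omega), hx0 h hh.le, sqNorm]

theorem sqNorm_sub_delayed_le_s4 {x : ℤ → ∀ j, H j} {jj : ℕ → Fin m}
    (hactive : ∀ (h : ℤ) (j : Fin m), x (h + 1) j ≠ x h j → ∃ n : ℕ, h = n ∧ jj n = j)
    {k τ ρ : ℕ} (hcount : ∀ j, Set.ncard {n : ℕ | k - τ ≤ n ∧ n ≤ k ∧ jj n = j} ≤ ρ)
    {d : Fin m → ℕ} (hd : ∀ j, d j ≤ τ) {Xd : ∀ j, H j} (hXd : ∀ j, Xd j = x ((k : ℤ) - d j) j) :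
    sqNorm (x k - Xd) ≤ ρ * windowSum τ (sqIncrement x) k := by
  calc sqNorm (x k - Xd) = ∑ j, ‖x k j - x ((k : ℤ) - d j) j‖ ^ 2 := by
        simp only [sqNorm, Pi.sub_apply, hXd]
    _ ≤ ∑ j, ρ * ∑ i ∈ range τ, ‖x ((k : ℤ) - τ + i + 1) j - x ((k : ℤ) - τ + i) j‖ ^ 2 :=
        sum_le_sum fun j _ =>
          norm_sub_delayed_sq_le (y := fun h => x h j) (hactive · j) (hcount j) (hd j)
    _ = ρ * windowSum τ (sqIncrement x) k := by
        rw [← mul_sum, sum_comm]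
        simp only [windowSum, sqIncrement, sqNorm, Pi.sub_apply]

variable [∀ j, InnerProductSpace ℝ (H j)] [∀ j, FiniteDimensional ℝ (H j)]
  {f : (∀ j, H j) → ℝ}

theorem le_add_inner_pgrad_add_sq_s4 (hf : Differentiable ℝ f) (X : ∀ j, H j) (j : Fin m) {L : ℝ}
    (hlip : ∀ y y', ‖pgrad f X j y - pgrad f X j y'‖ ≤ L * ‖y - y'‖) (b : H j) :
    f (Function.update X j b) ≤ f X + ⟪pgrad f X j (X j), b - X j⟫ + L / 2 * ‖b - X j‖ ^ 2 := by
  have hg : Differentiable ℝ fun z => f (Function.update X j z) := fun z =>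
    (hf _).comp z (hasFDerivAt_update X z).differentiableAt
  simpa only [pgrad, add_sub_cancel, Function.update_eq_self] using
    le_add_inner_gradient_add_sq hg hlip (X j) (b - X j)

theorem le_add_inner_delayed_pgrad (hf : Differentiable ℝ f) {X X' Xd : ∀ j, H j} {j : Fin m}
    (hoff : ∀ i, i ≠ j → X' i = X i) {L M : ℝ}
    (hlip : ∀ y y', ‖pgrad f X j y - pgrad f X j y'‖ ≤ L * ‖y - y'‖)
    (hMd : ‖pgrad f X j (X j) - pgrad f Xd j (Xd j)‖ ≤ M * √(sqNorm (X - Xd))) :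
    f X' ≤ f X + ⟪pgrad f Xd j (Xd j), X' j - X j⟫ +
      M * √(sqNorm (X - Xd)) * ‖X' j - X j‖ + L / 2 * ‖X' j - X j‖ ^ 2 := by
  have hX' : Function.update X j (X' j) = X' := by
    ext i
    rcases eq_or_ne i j with rfl | hi
    · simp
    · simp [hi, hoff i hi]
  have hdesc := le_add_inner_pgrad_add_sq_s4 hf X j hlip (X' j)
  rw [hX'] at hdesc
  have hgap : ⟪pgrad f X j (X j) - pgrad f Xd j (Xd j), X' j - X j⟫ ≤
      M * √(sqNorm (X - Xd)) * ‖X' j - X j‖ :=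
    (real_inner_le_norm _ _).trans (mul_le_mul_of_nonneg_right hMd (norm_nonneg _))
  rw [inner_sub_left] at hgap
  linarith

theorem add_lyapunov_increment_le_add_prox_model (hf : Differentiable ℝ f) {X X' Xd : ∀ j, H j}
    {j : Fin m} (hoff : ∀ i, i ≠ j → X' i = X i) {ρ τ : ℕ} (hρ : 0 < ρ) (hτ : 0 < τ) {L M c γ σ : ℝ}
    (hM : 0 ≤ M) (hc : 0 < c) (hγ : 0 < γ) (hγc : γ ≤ c / (L + 2 * M * √(ρ * τ)))
    (hlip : ∀ y y', ‖pgrad f X j y - pgrad f X j y'‖ ≤ L * ‖y - y'‖)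
    (hMd : ‖pgrad f X j (X j) - pgrad f Xd j (Xd j)‖ ≤ M * √(sqNorm (X - Xd)))
    (hdelay : sqNorm (X - Xd) ≤ ρ * σ) :
    f X' + M * √ρ / (2 * √τ) * (τ * ‖X' j - X j‖ ^ 2 - σ) +
        1 / 2 * (1 / c - 1) * (L + 2 * M * √(ρ * τ)) * ‖X' j - X j‖ ^ 2 ≤
      f X + (⟪pgrad f Xd j (Xd j), X' j - X j⟫ + 1 / (2 * γ) * ‖X' j - X j‖ ^ 2) := by
  set δ := ‖X' j - X j‖
  set A := √(sqNorm (X - Xd))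
  set η := √((ρ : ℝ) * τ)
  set S := L + 2 * M * η
  have hρ' : (0 : ℝ) < ρ := Nat.cast_pos.2 hρ
  have hτ' : (0 : ℝ) < τ := Nat.cast_pos.2 hτ
  have hη : η = √ρ * √τ := Real.sqrt_mul hρ'.le _
  have hηpos : 0 < η := by rw [hη]; positivity
  have hS : 0 < S := (div_pos_iff_of_pos_left hc).1 (hγ.trans_le hγc)
  -- Young's inequality with weight `η`; this is what fixes the weight `√ρ / (2√τ)` of `κ`.
  have hyoung : M * A * δ ≤ M * √ρ / (2 * √τ) * σ + M * η / 2 * δ ^ 2 := by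
    have h2 := two_mul_le_add_mul_sq (a := A) (b := δ) (inv_pos.2 hηpos)
    rw [inv_inv] at h2
    have hA : A ^ 2 ≤ ρ * σ := by rw [Real.sq_sqrt (sqNorm_nonneg_s4 _)]; exact hdelay
    have hρη : η⁻¹ * ρ = √ρ / √τ := by
      rw [hη]; field_simp; exact (Real.sq_sqrt hρ'.le).symm
    have hA' : η⁻¹ * A ^ 2 ≤ √ρ / √τ * σ := by
      rw [← hρη, mul_assoc]; exact mul_le_mul_of_nonneg_left hA (inv_nonneg.2 hηpos.le)
    calc M * A * δ = M / 2 * (2 * A * δ) := by ring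
      _ ≤ M / 2 * (η⁻¹ * A ^ 2 + η * δ ^ 2) := by gcongr
      _ ≤ M / 2 * (√ρ / √τ * σ + η * δ ^ 2) := by gcongr
      _ = _ := by ring
  have hτη : M * √ρ / (2 * √τ) * τ = M * η / 2 := by
    rw [hη]; field_simp; rw [Real.sq_sqrt hτ'.le]
  have hC : 1 / 2 * (1 / c - 1) * S = S / (2 * c) - S / 2 := by field_simp
  have hγS : S / (2 * c) ≤ 1 / (2 * γ) := by
    rw [div_le_div_iff₀ (by positivity) (by positivity)]
    nlinarith [(le_div_iff₀ hS).1 hγc]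
  have hdesc := le_add_inner_delayed_pgrad hf hoff hlip hMd
  calc f X' + M * √ρ / (2 * √τ) * (τ * δ ^ 2 - σ) + 1 / 2 * (1 / c - 1) * S * δ ^ 2
      = f X' + M * η / 2 * δ ^ 2 - M * √ρ / (2 * √τ) * σ + (S / (2 * c) - S / 2) * δ ^ 2 := by
        rw [← hτη, ← hC]; ring
    _ ≤ _ := by linarith [mul_le_mul_of_nonneg_right hγS (sq_nonneg δ)]

theorem add_sum_add_lyapunov_increment_le_of_prox (hf : Differentiable ℝ f)
    {r : ∀ j, H j → EReal} {X X' Xd : ∀ j, H j} {j : Fin m} (hoff : ∀ i, i ≠ j → X' i = X i)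
    {ρ τ : ℕ} (hρ : 0 < ρ) (hτ : 0 < τ) {L M c γ σ : ℝ} (hM : 0 ≤ M) (hc : 0 < c) (hγ : 0 < γ)
    (hγc : γ ≤ c / (L + 2 * M * √(ρ * τ)))
    (hlip : ∀ y y', ‖pgrad f X j y - pgrad f X j y'‖ ≤ L * ‖y - y'‖)
    (hMd : ‖pgrad f X j (X j) - pgrad f Xd j (Xd j)‖ ≤ M * √(sqNorm (X - Xd)))
    (hdelay : sqNorm (X - Xd) ≤ ρ * σ)
    (hprox : r j (X' j) +
        ((⟪pgrad f Xd j (Xd j), X' j - X j⟫ + 1 / (2 * γ) * ‖X' j - X j‖ ^ 2 : ℝ) : EReal) ≤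
      r j (X j) +
        ((⟪pgrad f Xd j (Xd j), X j - X j⟫ + 1 / (2 * γ) * ‖X j - X j‖ ^ 2 : ℝ) : EReal)) :
    (f X' : EReal) + ∑ i, r i (X' i) +
        ((M * √ρ / (2 * √τ) * (τ * ‖X' j - X j‖ ^ 2 - σ) +
          1 / 2 * (1 / c - 1) * (L + 2 * M * √(ρ * τ)) * ‖X' j - X j‖ ^ 2 : ℝ) : EReal) ≤
      f X + ∑ i, r i (X i) := by
  refine coe_add_sum_add_coe_le_of_update hoff ?_ (by simpa only [sub_self, inner_zero_right,
    norm_zero, ne_eq, OfNat.ofNat_ne_zero, not_false_eq_true, zero_pow, mul_zero, add_zero,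
    EReal.coe_zero] using hprox)
  linarith [add_lyapunov_increment_le_add_prox_model hf hoff hρ hτ hM hc hγ hγc hlip hMd hdelay]

end Blocks

theorem stmt_4_general {m : ℕ}
    (H : Fin m → Type*) [∀ j, NormedAddCommGroup (H j)]
    [∀ j, InnerProductSpace ℝ (H j)] [∀ j, FiniteDimensional ℝ (H j)]
    -- f is C¹
    (f : (∀ j, H j) → ℝ) (hf : ContDiff ℝ 1 f)
    (r : ∀ j, H j → EReal)
    -- Ψ = f + Σ_j r_j, bounded below
    (Ψ : (∀ j, H j) → EReal) (hΨ : ∀ x, Ψ x = (f x : EReal) + ∑ j, r j (x j))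
    (hΨbdd : ∃ B : ℝ, ∀ x, (B : EReal) ≤ Ψ x)
    -- parameters
    (τ ρτ : ℕ) (hτ : 1 ≤ τ) (hρτ1 : 1 ≤ ρτ)
    (c M L γmin : ℝ) (hc0 : 0 < c) (hc1 : c < 1) (hM : 0 < M) (hL : 0 < L)
    (hγmin : 0 < γmin)
    -- the iterates, extended by x^h = x^0 for h ≤ 0
    (x : ℤ → ∀ j, H j) (hx0 : ∀ h : ℤ, h ≤ 0 → x h = x 0)
    (hΨx0 : Ψ (x 0) < ⊤)
    -- active blocks and delays
    (jj : ℕ → Fin m) (d : ℕ → Fin m → ℕ) (hd : ∀ k j, d k j ≤ τ)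
    (hcount : ∀ (k : ℕ) (j : Fin m),
      Set.ncard {h : ℕ | k - τ ≤ h ∧ h ≤ k ∧ jj h = j} ≤ ρτ)
    -- the delayed iterate x^{k-d_k}
    (xd : ℕ → ∀ j, H j) (hxd : ∀ (k : ℕ) (j : Fin m), xd k j = x ((k : ℤ) - d k j) j)
    -- stepsizes
    (γ : ℕ → ℝ)
    (hγ : ∀ k, γmin ≤ γ k ∧ γ k ≤ c / (L + 2 * M * Real.sqrt ((ρτ : ℝ) * τ)))
    -- the update: only block j_k moves, and it moves to a minimizer of the prox-subproblem
    (hoff : ∀ (k : ℕ) (j : Fin m), j ≠ jj k → x ((k : ℤ) + 1) j = x k j)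
    (hprox : ∀ (k : ℕ) (y : H (jj k)),
      r (jj k) (x ((k : ℤ) + 1) (jj k)) +
        ((⟪pgrad f (xd k) (jj k) (xd k (jj k)), x ((k : ℤ) + 1) (jj k) - x k (jj k)⟫ +
            (1 / (2 * γ k)) * ‖x ((k : ℤ) + 1) (jj k) - x k (jj k)‖ ^ 2 : ℝ) : EReal) ≤
      r (jj k) y +
        ((⟪pgrad f (xd k) (jj k) (xd k (jj k)), y - x k (jj k)⟫ +
            (1 / (2 * γ k)) * ‖y - x k (jj k)‖ ^ 2 : ℝ) : EReal))
    -- (i) partial-gradient Lipschitz moduli, bounded by L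
    (Lip : ℕ → Fin m → ℝ)
    (hLip : ∀ (k : ℕ) (j : Fin m) (y y' : H j),
      ‖pgrad f (x k) j y - pgrad f (x k) j y'‖ ≤ Lip k j * ‖y - y'‖)
    (hLipL : ∀ k j, Lip k j ≤ L)
    -- (ii) delayed-gradient bound
    (hMd : ∀ k : ℕ,
      ‖pgrad f (x k) (jj k) (x k (jj k)) - pgrad f (xd k) (jj k) (xd k (jj k))‖ ≤
        M * Real.sqrt (sqNorm (x k - xd k)))
    -- κ_k, the Lyapunov value Φ_k, and the constant C
    (κ : ℕ → ℝ)
    (hκ : ∀ k : ℕ, κ k = (M * Real.sqrt ρτ / (2 * Real.sqrt τ)) *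
      ∑ i ∈ Finset.range τ,
        ((i : ℝ) + 1) * sqNorm (x ((k : ℤ) - τ + 1 + i) - x ((k : ℤ) - τ + i)))
    (C : ℝ) (hC : C = (1 / 2) * (1 / c - 1) * (L + 2 * M * Real.sqrt ((ρτ : ℝ) * τ)))
    (k₀ : ℕ) (hmove : x ((k₀ : ℤ) + 1) ≠ x k₀) :
    ∃ l : EReal, Tendsto (fun k : ℕ => Ψ (x k)) atTop (nhds l) ∧
      l ≤ Ψ (x 0) - ((C * sqNorm (x ((k₀ : ℤ) + 1) - x k₀) : ℝ) : EReal) ∧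
      Ψ (x 0) - ((C * sqNorm (x ((k₀ : ℤ) + 1) - x k₀) : ℝ) : EReal) < Ψ (x 0) := by
  obtain ⟨B, hB⟩ := hΨbdd
  set D := sqIncrement x
  set c₀ := M * √ρτ / (2 * √τ)
  have hκD : ∀ k : ℕ, κ k = c₀ * weightedWindowSum τ D k := fun k => by
    rw [hκ k, weightedWindowSum]
    exact congrArg _ (sum_congr rfl fun i _ => by simp only [D, sqIncrement]; ring_nf)
  have hCpos : 0 < C := by
    have hc' : 0 < 1 / c - 1 := by rw [one_div, sub_pos, one_lt_inv₀ hc0]; exact hc1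
    rw [hC]; positivity
  have hstep (k : ℕ) :
      Ψ (x (k + 1 : ℕ)) + ((κ (k + 1) + C * D k - κ k : ℝ) : EReal) ≤ Ψ (x k) := by
    have hDk : D k = ‖x (k + 1) (jj k) - x k (jj k)‖ ^ 2 := sqNorm_sub_eq_of_forall_ne (hoff k)
    rw [hΨ, hΨ, hκD, hκD, Nat.cast_succ, weightedWindowSum_succ, hC, hDk]
    convert add_sum_add_lyapunov_increment_le_of_prox (hf.differentiable one_ne_zero) (hoff k)
      hρτ1 hτ hM.le hc0 (hγmin.trans_le (hγ k).1) (hγ k).2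
      (fun y y' => (hLip k _ y y').trans (by gcongr; exact hLipL k _)) (hMd k)
      (sqNorm_sub_delayed_le_s4 (fun _ _ => exists_eq_natCast_of_ne hx0 hoff) (hcount k) (hd k)
        (hxd k)) (hprox k (x k (jj k))) using 3
    ring
  have hκ_lim (he : Tendsto (fun k : ℕ => C * D k) atTop (𝓝 0)) : Tendsto κ atTop (𝓝 0) := by
    have hD : Tendsto (fun k : ℕ => D k) atTop (𝓝 0) := by
      simpa [hCpos.ne'] using he.const_mul C⁻¹
    simpa [← hκD] using (tendsto_weightedWindowSum_zero τ hD).const_mul c₀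
  obtain ⟨l, hl, hle⟩ := exists_tendsto_le_sub_of_lyapunov (a := fun k : ℕ => Ψ (x k))
    (by simpa using hΨx0.ne) (fun k => hB _)
    (fun k => hκD k ▸ mul_nonneg (by positivity)
      (weightedWindowSum_nonneg τ (fun _ => sqNorm_nonneg_s4 _) k))
    (by rw [hκD, Nat.cast_zero, weightedWindowSum_eq_zero τ (fun _ => sqIncrement_eq_zero hx0),
      mul_zero])
    (fun k => mul_nonneg hCpos.le (sqNorm_nonneg_s4 _)) hstep hκ_lim k₀
  refine ⟨l, hl, hle, EReal.sub_coe_lt_self hΨx0.ne ((EReal.bot_lt_coe B).trans_le (hB _)).ne'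
    (mul_pos hCpos (sqNorm_pos (sub_ne_zero.2 hmove)))⟩

theorem stmt_4 {m : ℕ} (hm : 1 ≤ m)
    (H : Fin m → Type*) [∀ j, NormedAddCommGroup (H j)]
    [∀ j, InnerProductSpace ℝ (H j)] [∀ j, FiniteDimensional ℝ (H j)]
    -- f is C¹
    (f : (∀ j, H j) → ℝ) (hf : ContDiff ℝ 1 f)
    -- each r_j is proper and lower semicontinuous with values in (−∞, +∞]
    (r : ∀ j, H j → EReal)
    (hr_ne_top : ∀ j, ∃ y, r j y ≠ ⊤) (hr_ne_bot : ∀ j y, r j y ≠ ⊥)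
    (hr_lsc : ∀ j, LowerSemicontinuous (r j))
    -- Ψ = f + Σ_j r_j, bounded below
    (Ψ : (∀ j, H j) → EReal) (hΨ : ∀ x, Ψ x = (f x : EReal) + ∑ j, r j (x j))
    (hΨbdd : ∃ B : ℝ, ∀ x, (B : EReal) ≤ Ψ x)
    -- parameters
    (τ ρτ : ℕ) (hτ : 1 ≤ τ) (hρτ1 : 1 ≤ ρτ) (hρττ : ρτ ≤ τ)
    (c M L γmin : ℝ) (hc0 : 0 < c) (hc1 : c < 1) (hM : 0 < M) (hL : 0 < L)
    (hγmin : 0 < γmin)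
    -- the iterates, extended by x^h = x^0 for h ≤ 0
    (x : ℤ → ∀ j, H j) (hx0 : ∀ h : ℤ, h ≤ 0 → x h = x 0)
    (hΨx0 : Ψ (x 0) < ⊤)
    -- active blocks and delays
    (jj : ℕ → Fin m) (d : ℕ → Fin m → ℕ) (hd : ∀ k j, d k j ≤ τ)
    (hcount : ∀ (k : ℕ) (j : Fin m),
      Set.ncard {h : ℕ | k - τ ≤ h ∧ h ≤ k ∧ jj h = j} ≤ ρτ)
    -- the delayed iterate x^{k-d_k}
    (xd : ℕ → ∀ j, H j) (hxd : ∀ (k : ℕ) (j : Fin m), xd k j = x ((k : ℤ) - d k j) j)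
    -- stepsizes
    (γ : ℕ → ℝ)
    (hγ : ∀ k, γmin ≤ γ k ∧ γ k ≤ c / (L + 2 * M * Real.sqrt ((ρτ : ℝ) * τ)))
    -- the update: only block j_k moves, and it moves to a minimizer of the prox-subproblem
    (hoff : ∀ (k : ℕ) (j : Fin m), j ≠ jj k → x ((k : ℤ) + 1) j = x k j)
    (hprox : ∀ (k : ℕ) (y : H (jj k)),
      r (jj k) (x ((k : ℤ) + 1) (jj k)) +
        ((⟪pgrad f (xd k) (jj k) (xd k (jj k)), x ((k : ℤ) + 1) (jj k) - x k (jj k)⟫ +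
            (1 / (2 * γ k)) * ‖x ((k : ℤ) + 1) (jj k) - x k (jj k)‖ ^ 2 : ℝ) : EReal) ≤
      r (jj k) y +
        ((⟪pgrad f (xd k) (jj k) (xd k (jj k)), y - x k (jj k)⟫ +
            (1 / (2 * γ k)) * ‖y - x k (jj k)‖ ^ 2 : ℝ) : EReal))
    -- (i) partial-gradient Lipschitz moduli, bounded by L
    (Lip : ℕ → Fin m → ℝ)
    (hLip : ∀ (k : ℕ) (j : Fin m) (y y' : H j),
      ‖pgrad f (x k) j y - pgrad f (x k) j y'‖ ≤ Lip k j * ‖y - y'‖)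
    (hLipL : ∀ k j, Lip k j ≤ L)
    -- (ii) delayed-gradient bound
    (hMd : ∀ k : ℕ,
      ‖pgrad f (x k) (jj k) (x k (jj k)) - pgrad f (xd k) (jj k) (xd k (jj k))‖ ≤
        M * Real.sqrt (sqNorm (x k - xd k)))
    -- κ_k, the Lyapunov value Φ_k, and the constant C
    (κ : ℕ → ℝ)
    (hκ : ∀ k : ℕ, κ k = (M * Real.sqrt ρτ / (2 * Real.sqrt τ)) *
      ∑ i ∈ Finset.range τ,
        ((i : ℝ) + 1) * sqNorm (x ((k : ℤ) - τ + 1 + i) - x ((k : ℤ) - τ + i)))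
    (Φ : ℕ → EReal) (hΦ : ∀ k : ℕ, Φ k = Ψ (x k) + (κ k : EReal))
    (C : ℝ) (hC : C = (1 / 2) * (1 / c - 1) * (L + 2 * M * Real.sqrt ((ρτ : ℝ) * τ)))
    (k₀ : ℕ) (hmove : x ((k₀ : ℤ) + 1) ≠ x k₀) :
    ∃ l : EReal, Tendsto (fun k : ℕ => Ψ (x k)) atTop (nhds l) ∧
      l ≤ Ψ (x 0) - ((C * sqNorm (x ((k₀ : ℤ) + 1) - x k₀) : ℝ) : EReal) ∧
      Ψ (x 0) - ((C * sqNorm (x ((k₀ : ℤ) + 1) - x k₀) : ℝ) : EReal) < Ψ (x 0) :=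
  stmt_4_general H f hf r Ψ hΨ hΨbdd τ ρτ hτ hρτ1 c M L γmin hc0 hc1 hM hL hγmin x hx0 hΨx0 jj d hd
    hcount xd hxd γ hγ hoff hprox Lip hLip hLipL hMd κ hκ C hC k₀ hmove
end
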